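/- Let T and X be A-bounded operators on H admitting A-adjoints Ts and Xs (i.e. A∘Ts = T*∘A and A∘Xs = X*∘A). Then max{w_A(T+X), w_A(T−X)} ≤ √(w_A(X)² + w_A(X∘T) + w_A(T)² + (1/2)·‖X∘Xs + Ts∘T‖_A). -/

import Mathlib

noncomputable def sInner {E : Type*} [NormedAddCommGroup E] [InnerProductSpace ℂ E]
    (A : E →L[ℂ] E) (x y : E) : ℂ := inner ℂ (A x) y

noncomputable def sNorm {E : Type*} [NormedAddCommGroup E] [InnerProductSpace ℂ E]
    (A : E →L[ℂ] E) (x : E) : ℝ := Real.sqrt (sInner A x x).re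

/-- The `A`-operator seminorm. -/
noncomputable def opSNorm {E : Type*} [NormedAddCommGroup E] [InnerProductSpace ℂ E]
    (A T : E →L[ℂ] E) : ℝ := sSup {c | ∃ x : E, sNorm A x = 1 ∧ c = sNorm A (T x)}

/-- The `A`-numerical radius. -/
noncomputable def numRad {E : Type*} [NormedAddCommGroup E] [InnerProductSpace ℂ E]
    (A T : E →L[ℂ] E) : ℝ := sSup {c | ∃ x : E, sNorm A x = 1 ∧ c = ‖sInner A (T x) x‖}

/-- `T` is `A`-bounded. -/
def ABounded {E : Type*} [NormedAddCommGroup E] [InnerProductSpace ℂ E]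
    (A T : E →L[ℂ] E) : Prop := ∃ c > 0, ∀ x : E, sNorm A (T x) ≤ c * sNorm A x

/-- The 2×2 block operator `[[T, X], [Y, S]]` on `H ⊕ H` (with the ℓ² product structure). -/
noncomputable def blk {H : Type*} [NormedAddCommGroup H] [InnerProductSpace ℂ H]
    (T X Y S : H →L[ℂ] H) : WithLp 2 (H × H) →L[ℂ] WithLp 2 (H × H) :=
  ((WithLp.prodContinuousLinearEquiv 2 ℂ H H).symm.toContinuousLinearMap.comp
    (((T.coprod X).prod (Y.coprod S)).comp
      (WithLp.prodContinuousLinearEquiv 2 ℂ H H).toContinuousLinearMap))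

/-- The diagonal operator `𝔸 = diag(A, A)` on `H ⊕ H`. -/
noncomputable def twoA {H : Type*} [NormedAddCommGroup H] [InnerProductSpace ℂ H]
    (A : H →L[ℂ] H) : WithLp 2 (H × H) →L[ℂ] WithLp 2 (H × H) := blk A 0 0 A

/-!
Factor the positive operator as `A = R† R`, so that `⟨x, y⟩_A = ⟪R x, R y⟫` and all of
Cauchy–Schwarz, the triangle inequality and Buzano's inequality transfer to the semi-inner
product. For an `A`-unit vector `x`, both `|⟨(T ± X) x, x⟩_A|` are at most `p + q` with
`p = |⟨T x, x⟩_A| ≤ w_A(T)` and `q = |⟨X x, x⟩_A| = |⟨x, Xs x⟩_A| ≤ w_A(X)`. Buzano's inequality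
for the vectors `T x`, `x`, `Xs x` gives
`2 p q ≤ ‖T x‖_A ‖Xs x‖_A + |⟨X T x, x⟩_A| ≤ ½ ⟨(X Xs + Ts T) x, x⟩_A + w_A(X T)`,
and `(p + q)² = p² + 2 p q + q²` is then bounded by the radicand.
-/

open ContinuousLinearMap

/-- Buzano's inequality. -/
theorem two_mul_norm_inner_mul_inner_le {𝕜 E : Type*} [RCLike 𝕜] [SeminormedAddCommGroup E]
    [InnerProductSpace 𝕜 E] {e : E} (he : ‖e‖ = 1) (a b : E) :
    2 * ‖inner 𝕜 a e * inner 𝕜 e b‖ ≤ ‖a‖ * ‖b‖ + ‖inner 𝕜 a b‖ := by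
  -- `a'` is the reflection of `a` in the hyperplane orthogonal to `e`.
  set c : 𝕜 := inner 𝕜 e a
  set a' := a - (2 * c) • e
  have hc : (starRingEnd 𝕜) c = inner 𝕜 a e := inner_conj_symm a e
  have hnorm : ‖a'‖ = ‖a‖ := by
    have hsq : ‖a'‖ ^ 2 = ‖a‖ ^ 2 := by
      rw [norm_sub_sq (𝕜 := 𝕜), norm_smul, he, inner_smul_right, ← hc, mul_assoc, RCLike.mul_conj]
      norm_cast
      rw [norm_mul, RCLike.norm_ofNat]
      ring
    exact (pow_left_inj₀ (norm_nonneg _) (norm_nonneg _) two_ne_zero).mp hsq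
  have hinner : inner 𝕜 a' b = inner 𝕜 a b - 2 * (inner 𝕜 a e * inner 𝕜 e b) := by
    rw [inner_sub_left, inner_smul_left, map_mul, hc, map_ofNat]
    ring
  calc 2 * ‖inner 𝕜 a e * inner 𝕜 e b‖ = ‖inner 𝕜 a' b - inner 𝕜 a b‖ := by
        rw [hinner, sub_sub_cancel_left, norm_neg, norm_mul (2 : 𝕜), RCLike.norm_ofNat]
    _ ≤ ‖inner 𝕜 a' b‖ + ‖inner 𝕜 a b‖ := norm_sub_le _ _
    _ ≤ ‖a‖ * ‖b‖ + ‖inner 𝕜 a b‖ := by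
        gcongr
        exact hnorm ▸ norm_inner_le_norm a' b

section ABounded

variable {H : Type*} [NormedAddCommGroup H] [InnerProductSpace ℂ H] {A S T : H →L[ℂ] H}

theorem sNorm_nonneg (A : H →L[ℂ] H) (x : H) : 0 ≤ sNorm A x := Real.sqrt_nonneg _

theorem ABounded.comp (hS : ABounded A S) (hT : ABounded A T) : ABounded A (S ∘L T) := by
  obtain ⟨c, hc, hSc⟩ := hS
  obtain ⟨d, hd, hTd⟩ := hT
  refine ⟨c * d, mul_pos hc hd, fun x => ?_⟩
  calc sNorm A (S (T x)) ≤ c * sNorm A (T x) := hSc _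
    _ ≤ c * (d * sNorm A x) := by gcongr; exact hTd x
    _ = c * d * sNorm A x := by ring

theorem ABounded.sNorm_le_opSNorm (hT : ABounded A T) {x : H} (hx : sNorm A x = 1) :
    sNorm A (T x) ≤ opSNorm A T := by
  obtain ⟨c, -, hTc⟩ := hT
  refine le_csSup ⟨c, ?_⟩ ⟨x, hx, rfl⟩
  rintro _ ⟨y, hy, rfl⟩
  simpa only [hy, mul_one] using hTc y

end ABounded

section SemiInner

variable {H : Type*} [NormedAddCommGroup H] [InnerProductSpace ℂ H] [CompleteSpace H]
  {A : H →L[ℂ] H}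

theorem ContinuousLinearMap.IsPositive.exists_eq_adjoint_comp_self (hA : A.IsPositive) :
    ∃ R : H →L[ℂ] H, A = adjoint R ∘L R := by
  obtain ⟨R, hR⟩ := CStarAlgebra.nonneg_iff_eq_star_mul_self.mp ((nonneg_iff_isPositive A).mpr hA)
  exact ⟨R, by rw [hR, star_eq_adjoint, mul_def]⟩

theorem sInner_adjoint_comp_self (R : H →L[ℂ] H) (x y : H) :
    sInner (adjoint R ∘L R) x y = inner ℂ (R x) (R y) := by
  rw [sInner, comp_apply, adjoint_inner_left]

theorem sNorm_adjoint_comp_self (R : H →L[ℂ] H) (x : H) :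
    sNorm (adjoint R ∘L R) x = ‖R x‖ := by
  rw [sNorm, sInner_adjoint_comp_self, inner_self_eq_norm_sq_to_K]
  norm_cast
  exact Real.sqrt_sq (norm_nonneg _)

theorem sNorm_sq (hA : A.IsPositive) (x : H) : sNorm A x ^ 2 = (sInner A x x).re := by
  obtain ⟨R, rfl⟩ := hA.exists_eq_adjoint_comp_self
  rw [sNorm_adjoint_comp_self, sInner_adjoint_comp_self, inner_self_eq_norm_sq_to_K]
  norm_cast

theorem conj_sInner (hA : A.IsPositive) (x y : H) :
    (starRingEnd ℂ) (sInner A x y) = sInner A y x := by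
  obtain ⟨R, rfl⟩ := hA.exists_eq_adjoint_comp_self
  simp only [sInner_adjoint_comp_self, inner_conj_symm]

theorem norm_sInner_le (hA : A.IsPositive) (x y : H) :
    ‖sInner A x y‖ ≤ sNorm A x * sNorm A y := by
  obtain ⟨R, rfl⟩ := hA.exists_eq_adjoint_comp_self
  simpa only [sInner_adjoint_comp_self, sNorm_adjoint_comp_self] using norm_inner_le_norm _ _

theorem sNorm_add_le (hA : A.IsPositive) (x y : H) :
    sNorm A (x + y) ≤ sNorm A x + sNorm A y := by
  obtain ⟨R, rfl⟩ := hA.exists_eq_adjoint_comp_self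
  simpa only [sNorm_adjoint_comp_self, map_add] using norm_add_le _ _

theorem two_mul_norm_sInner_mul_sInner_le (hA : A.IsPositive) {e : H} (he : sNorm A e = 1)
    (a b : H) :
    2 * ‖sInner A a e * sInner A e b‖ ≤ sNorm A a * sNorm A b + ‖sInner A a b‖ := by
  obtain ⟨R, rfl⟩ := hA.exists_eq_adjoint_comp_self
  simp only [sInner_adjoint_comp_self, sNorm_adjoint_comp_self] at he ⊢
  exact two_mul_norm_inner_mul_inner_le he _ _

end SemiInner

section AAdjoint

variable {H : Type*} [NormedAddCommGroup H] [InnerProductSpace ℂ H] [CompleteSpace H]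
  {A T S : H →L[ℂ] H}

def IsAAdjoint (A T S : H →L[ℂ] H) : Prop := A ∘L S = adjoint T ∘L A

theorem IsAAdjoint.sInner_apply_left (h : IsAAdjoint A T S) (x y : H) :
    sInner A (S x) y = sInner A x (T y) := by
  rw [sInner, ← comp_apply A S, h, comp_apply, adjoint_inner_left, sInner]

theorem IsAAdjoint.sInner_apply_right (hA : A.IsPositive) (h : IsAAdjoint A T S) (x y : H) :
    sInner A x (S y) = sInner A (T x) y := by
  rw [← conj_sInner hA, h.sInner_apply_left, conj_sInner hA]

theorem ABounded.add (hA : A.IsPositive) (hS : ABounded A S) (hT : ABounded A T) :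
    ABounded A (S + T) := by
  obtain ⟨c, hc, hSc⟩ := hS
  obtain ⟨d, hd, hTd⟩ := hT
  refine ⟨c + d, add_pos hc hd, fun x => ?_⟩
  calc sNorm A (S x + T x) ≤ sNorm A (S x) + sNorm A (T x) := sNorm_add_le hA _ _
    _ ≤ c * sNorm A x + d * sNorm A x := add_le_add (hSc x) (hTd x)
    _ = (c + d) * sNorm A x := by ring

theorem IsAAdjoint.aBounded (hA : A.IsPositive) (h : IsAAdjoint A T S) (hT : ABounded A T) :
    ABounded A S := by
  obtain ⟨c, hc, hTc⟩ := hT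
  refine ⟨c, hc, fun y => ?_⟩
  have hsq : sNorm A (S y) ^ 2 ≤ c * sNorm A y * sNorm A (S y) :=
    calc sNorm A (S y) ^ 2 = (sInner A y (T (S y))).re := by
          rw [sNorm_sq hA, h.sInner_apply_left]
      _ ≤ sNorm A y * sNorm A (T (S y)) := (Complex.re_le_norm _).trans (norm_sInner_le hA _ _)
      _ ≤ sNorm A y * (c * sNorm A (S y)) := mul_le_mul_of_nonneg_left (hTc _) (sNorm_nonneg A y)
      _ = c * sNorm A y * sNorm A (S y) := by ring
  rcases (sNorm_nonneg A (S y)).eq_or_lt with h0 | h0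
  · exact h0 ▸ mul_nonneg hc.le (sNorm_nonneg A y)
  · exact le_of_mul_le_mul_right (by rwa [sq] at hsq) h0

theorem ABounded.norm_sInner_le_numRad (hA : A.IsPositive) (hT : ABounded A T) {x : H}
    (hx : sNorm A x = 1) : ‖sInner A (T x) x‖ ≤ numRad A T := by
  obtain ⟨c, -, hTc⟩ := hT
  refine le_csSup ⟨c, ?_⟩ ⟨x, hx, rfl⟩
  rintro _ ⟨y, hy, rfl⟩
  calc ‖sInner A (T y) y‖ ≤ sNorm A (T y) * sNorm A y := norm_sInner_le hA _ _
    _ ≤ c := by simpa only [hy, mul_one] using hTc y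

end AAdjoint

section NumRad

variable {H : Type*} [NormedAddCommGroup H] [InnerProductSpace ℂ H] [CompleteSpace H]
  {A T X Ts Xs : H →L[ℂ] H}

theorem two_mul_norm_sInner_mul_norm_sInner_le (hA : A.IsPositive) (hTs : IsAAdjoint A T Ts)
    (hXs : IsAAdjoint A X Xs) {x : H} (hx : sNorm A x = 1) :
    2 * (‖sInner A (T x) x‖ * ‖sInner A (X x) x‖) ≤
      ‖sInner A (X (T x)) x‖ + (1 / 2) * (sInner A ((X ∘L Xs + Ts ∘L T) x) x).re := by
  have hbuzano := two_mul_norm_sInner_mul_sInner_le hA hx (T x) (Xs x)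
  rw [hXs.sInner_apply_right hA, hXs.sInner_apply_right hA, norm_mul] at hbuzano
  have hsq : sNorm A (T x) ^ 2 + sNorm A (Xs x) ^ 2 =
      (sInner A ((X ∘L Xs + Ts ∘L T) x) x).re := by
    rw [sNorm_sq hA, sNorm_sq hA, hXs.sInner_apply_right hA, ← hTs.sInner_apply_left,
      ← Complex.add_re, add_comm]
    simp only [sInner, add_apply, comp_apply, map_add, inner_add_left]
  nlinarith [sq_nonneg (sNorm A (T x) - sNorm A (Xs x))]

theorem norm_sInner_add_norm_sInner_le (hA : A.IsPositive) (hT : ABounded A T)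
    (hX : ABounded A X) (hTs : IsAAdjoint A T Ts) (hXs : IsAAdjoint A X Xs) {x : H}
    (hx : sNorm A x = 1) :
    ‖sInner A (T x) x‖ + ‖sInner A (X x) x‖ ≤
      √(numRad A X ^ 2 + numRad A (X ∘L T) + numRad A T ^ 2 +
        (1 / 2) * opSNorm A (X ∘L Xs + Ts ∘L T)) := by
  have hS : ABounded A (X ∘L Xs + Ts ∘L T) :=
    (hX.comp (hXs.aBounded hA hX)).add hA ((hTs.aBounded hA hT).comp hT)
  have hSx : (sInner A ((X ∘L Xs + Ts ∘L T) x) x).re ≤ opSNorm A (X ∘L Xs + Ts ∘L T) :=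
    calc (sInner A ((X ∘L Xs + Ts ∘L T) x) x).re
        ≤ sNorm A ((X ∘L Xs + Ts ∘L T) x) * sNorm A x :=
          (Complex.re_le_norm _).trans (norm_sInner_le hA _ _)
      _ ≤ opSNorm A (X ∘L Xs + Ts ∘L T) := by rw [hx, mul_one]; exact hS.sNorm_le_opSNorm hx
  have hp := hT.norm_sInner_le_numRad hA hx
  have hq := hX.norm_sInner_le_numRad hA hx
  have hXT : ‖sInner A (X (T x)) x‖ ≤ numRad A (X ∘L T) := (hX.comp hT).norm_sInner_le_numRad hA hx
  have hpq := two_mul_norm_sInner_mul_norm_sInner_le hA hTs hXs hx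
  apply Real.le_sqrt_of_sq_le
  nlinarith [pow_le_pow_left₀ (norm_nonneg _) hp 2, pow_le_pow_left₀ (norm_nonneg _) hq 2]

end NumRad

theorem stmt13 {H : Type*} [NormedAddCommGroup H] [InnerProductSpace ℂ H] [CompleteSpace H]
    (A : H →L[ℂ] H) (hA : A.IsPositive)
    (T X Ts Xs : H →L[ℂ] H) (hT : ABounded A T) (hX : ABounded A X)
    (hTs : A.comp Ts = (ContinuousLinearMap.adjoint T).comp A)
    (hXs : A.comp Xs = (ContinuousLinearMap.adjoint X).comp A) :
    max (numRad A (T + X)) (numRad A (T - X)) ≤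
      Real.sqrt ((numRad A X) ^ 2 + numRad A (X.comp T) + (numRad A T) ^ 2 +
        (1 / 2) * opSNorm A (X.comp Xs + Ts.comp T)) := by
  have hbound := fun x (hx : sNorm A x = 1) => norm_sInner_add_norm_sInner_le hA hT hX hTs hXs hx
  refine max_le (Real.sSup_le ?_ (Real.sqrt_nonneg _)) (Real.sSup_le ?_ (Real.sqrt_nonneg _))
  · rintro _ ⟨x, hx, rfl⟩
    calc ‖sInner A ((T + X) x) x‖ ≤ ‖sInner A (T x) x‖ + ‖sInner A (X x) x‖ := by
          simpa only [sInner, add_apply, map_add, inner_add_left] using norm_add_le _ _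
      _ ≤ _ := hbound x hx
  · rintro _ ⟨x, hx, rfl⟩
    calc ‖sInner A ((T - X) x) x‖ ≤ ‖sInner A (T x) x‖ + ‖sInner A (X x) x‖ := by
          simpa only [sInner, sub_apply, map_sub, inner_sub_left] using norm_sub_le _ _
      _ ≤ _ := hbound x hx
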